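/- For D ≠ 0, 1 and c ≠ 0, the functions û(z) = −sech²(z)(2D tanh(z) − c)/(c(1−D)) and v̂(z) = sech²(z)(2 tanh(z) − c)/(c(1−D)) satisfy û'' + c û' + g(û,v̂) = 0 and D v̂'' + c v̂' − g(û,v̂) = 0, where g(u,v) = 6(u² − D²v²) + [(c²−4)u + (c²−4D²)v]/(1−D). -/

import Mathlib

/-!
Both profiles have the form `sech² z · (α tanh z + β)`. Since `tanh' = 1 - tanh²` and
`sech² = 1 - tanh²`, such functions and their derivatives are polynomials in `t = tanh z`,
so each travelling-wave equation reduces to a polynomial identity in `t`, with coefficients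
rational in `c` and `D`, which holds once the denominators `c` and `1 - D` are cleared.
-/

open Real

theorem one_div_cosh_sq (z : ℝ) : (1 / cosh z) ^ 2 = 1 - tanh z ^ 2 := by
  have hcosh : cosh z ≠ 0 := (cosh_pos z).ne'
  rw [tanh_eq_sinh_div_cosh]
  field_simp
  linarith [cosh_sq_sub_sinh_sq z]

theorem hasDerivAt_tanh (z : ℝ) : HasDerivAt tanh (1 - tanh z ^ 2) z := by
  have hcosh : cosh z ≠ 0 := (cosh_pos z).ne'
  have hquot := (hasDerivAt_sinh z).div (hasDerivAt_cosh z) hcosh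
  rw [show sinh / cosh = tanh from funext fun y => (tanh_eq_sinh_div_cosh y).symm] at hquot
  refine hquot.congr_deriv ?_
  rw [tanh_eq_sinh_div_cosh]
  field_simp

theorem deriv_comp_tanh {p p' : ℝ → ℝ} (hp : ∀ t, HasDerivAt p (p' t) t) :
    deriv (fun z => p (tanh z)) = fun z => p' (tanh z) * (1 - tanh z ^ 2) := by
  funext z
  exact ((hp (tanh z)).comp z (hasDerivAt_tanh z)).deriv

/-- `sech² z · (α tanh z + β)`, written in the variable `t = tanh z`. -/
def sechSqProfile (α β t : ℝ) : ℝ := (1 - t ^ 2) * (α * t + β)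

section sechSqProfile

variable (α β : ℝ)

theorem deriv_sechSqProfile_comp_tanh :
    deriv (fun z => sechSqProfile α β (tanh z))
      = fun z => (α - 2 * β * tanh z - 3 * α * tanh z ^ 2) * (1 - tanh z ^ 2) := by
  refine deriv_comp_tanh (p' := fun t => α - 2 * β * t - 3 * α * t ^ 2) fun t => ?_
  have h := ((hasDerivAt_pow 2 t).const_sub 1).mul (((hasDerivAt_id t).const_mul α).add_const β)
  exact h.congr_deriv (by simp only [id_eq, Nat.cast_ofNat]; ring)

theorem deriv_deriv_sechSqProfile_comp_tanh :
    deriv (deriv (fun z => sechSqProfile α β (tanh z)))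
      = fun z => (-2 * β - 8 * α * tanh z + 6 * β * tanh z ^ 2 + 12 * α * tanh z ^ 3)
          * (1 - tanh z ^ 2) := by
  rw [deriv_sechSqProfile_comp_tanh]
  refine deriv_comp_tanh (p := fun t => (α - 2 * β * t - 3 * α * t ^ 2) * (1 - t ^ 2))
    (p' := fun t => -2 * β - 8 * α * t + 6 * β * t ^ 2 + 12 * α * t ^ 3) fun t => ?_
  have h := ((((hasDerivAt_id t).const_mul (2 * β)).const_sub α).sub
    ((hasDerivAt_pow 2 t).const_mul (3 * α))).mul ((hasDerivAt_pow 2 t).const_sub 1)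
  exact h.congr_deriv (by simp only [id_eq, Nat.cast_ofNat, Pi.sub_apply]; ring)

end sechSqProfile

theorem nonstationary_pulse_general_general (D c : ℝ) (hD1 : D ≠ 1) (hc : c ≠ 0) :
    let g : ℝ → ℝ → ℝ := fun u v =>
      6 * (u ^ 2 - D ^ 2 * v ^ 2)
        + ((c ^ 2 - 4) * u + (c ^ 2 - 4 * D ^ 2) * v) / (1 - D)
    let u : ℝ → ℝ := fun z =>
      -((1 / Real.cosh z) ^ 2 * (2 * D * Real.tanh z - c)) / (c * (1 - D))
    let v : ℝ → ℝ := fun z =>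
      ((1 / Real.cosh z) ^ 2 * (2 * Real.tanh z - c)) / (c * (1 - D))
    ∀ z : ℝ,
      deriv (deriv u) z + c * deriv u z + g (u z) (v z) = 0
        ∧ D * deriv (deriv v) z + c * deriv v z - g (u z) (v z) = 0 := by
  intro g u v z
  have hD : 1 - D ≠ 0 := sub_ne_zero.mpr hD1.symm
  have hu : u = fun z => sechSqProfile (-(2 * D) / (c * (1 - D))) (1 / (1 - D)) (tanh z) := by
    funext z
    simp only [u, sechSqProfile, one_div_cosh_sq]
    field_simp
    ring
  have hv : v = fun z => sechSqProfile (2 / (c * (1 - D))) (-1 / (1 - D)) (tanh z) := by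
    funext z
    simp only [v, sechSqProfile, one_div_cosh_sq]
    field_simp
    ring
  rw [hu, hv]
  -- the second derivatives must be rewritten before the first-derivative lemma reaches inside them
  simp only [g, deriv_deriv_sechSqProfile_comp_tanh]
  simp only [deriv_sechSqProfile_comp_tanh]
  simp only [sechSqProfile]
  generalize tanh z = t
  constructor <;> field_simp <;> ring

/-- The exact nonstationary pulse solves the travelling wave system
û'' + c û' + g(û,v̂) = 0 and D v̂'' + c v̂' − g(û,v̂) = 0 with
g(u,v) = 6(u² − D²v²) + [(c²−4)u + (c²−4D²)v]/(1−D). -/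
theorem nonstationary_pulse_general (D c : ℝ) (hD0 : D ≠ 0) (hD1 : D ≠ 1) (hc : c ≠ 0) :
    let g : ℝ → ℝ → ℝ := fun u v =>
      6 * (u ^ 2 - D ^ 2 * v ^ 2)
        + ((c ^ 2 - 4) * u + (c ^ 2 - 4 * D ^ 2) * v) / (1 - D)
    let u : ℝ → ℝ := fun z =>
      -((1 / Real.cosh z) ^ 2 * (2 * D * Real.tanh z - c)) / (c * (1 - D))
    let v : ℝ → ℝ := fun z =>
      ((1 / Real.cosh z) ^ 2 * (2 * Real.tanh z - c)) / (c * (1 - D))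
    ∀ z : ℝ,
      deriv (deriv u) z + c * deriv u z + g (u z) (v z) = 0
        ∧ D * deriv (deriv v) z + c * deriv v z - g (u z) (v z) = 0 :=
  nonstationary_pulse_general_general D c hD1 hc
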